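/- The function g_{1/2}(x) = (4πx³)^{−1/2} exp(−1/(4x)) on (0,∞) has Laplace transform ∫_0^∞ e^{−sx} g_{1/2}(x) dx = e^{−√s} for all s > 0. -/

import Mathlib

open Real

/-- The density of the standard stable subordinator of index 1/2. -/
noncomputable def stableDensityHalf (x : ℝ) : ℝ :=
  (1 / Real.sqrt (4 * π * x ^ 3)) * Real.exp (-1 / (4 * x))

/-!
The substitution `x = 1 / (4 u²)` turns the Laplace transform into
`(2 / √π) ∫₀^∞ exp (-(u² + (c / u)²)) du` with `c = √s / 2`, and
`u² + (c / u)² = (u - c / u)² + 2c`. The remaining integral of `exp (-(u - c / u)²)` is half the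
Gaussian integral: under `v = u - c / u` we have `dv = (1 + c / u²) du`, and the inversion
`u ↦ c / u`, which maps `u - c / u` to its negative, shows that the two summands contribute
equally.
-/

open MeasureTheory Set

section Substitution

variable {E : Type*} [NormedAddCommGroup E] [NormedSpace ℝ E]

theorem image_const_div_Ioi_zero {c : ℝ} (hc : 0 < c) :
    (fun u : ℝ => c / u) '' Ioi 0 = Ioi 0 := by
  refine Subset.antisymm (image_subset_iff.2 fun u hu => div_pos hc hu) fun x hx => ?_
  exact ⟨c / x, div_pos hc hx, div_div_cancel₀ hc.ne'⟩

theorem hasDerivAt_const_div (c : ℝ) {u : ℝ} (hu : u ≠ 0) :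
    HasDerivAt (fun u : ℝ => c / u) (-(c / u ^ 2)) u := by
  simpa [div_eq_mul_inv] using (hasDerivAt_inv hu).const_mul c

theorem integral_Ioi_comp_const_div (f : ℝ → E) {c : ℝ} (hc : 0 < c) :
    ∫ u in Ioi 0, (c / u ^ 2) • f (c / u) = ∫ x in Ioi 0, f x := by
  have hanti : AntitoneOn (fun u : ℝ => c / u) (Ioi 0) := fun _ ha _ _ hab =>
    div_le_div_of_nonneg_left hc.le ha hab
  conv_rhs => rw [← image_const_div_Ioi_zero hc]
  rw [integral_image_eq_integral_deriv_smul_of_antitoneOn measurableSet_Ioi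
    (fun u hu => (hasDerivAt_const_div c (ne_of_gt hu)).hasDerivWithinAt) hanti]
  simp_rw [neg_neg]

theorem image_sub_const_div_Ioi_zero {c : ℝ} (hc : 0 < c) :
    (fun u : ℝ => u - c / u) '' Ioi 0 = univ := by
  refine eq_univ_of_forall fun v => ?_
  -- the positive root of `u ^ 2 - v * u - c = 0`
  set w := √(v ^ 2 + 4 * c)
  have hw : w ^ 2 = v ^ 2 + 4 * c := sq_sqrt (by positivity)
  have hvw : -v < w := by nlinarith [sqrt_nonneg (v ^ 2 + 4 * c), sq_nonneg (w + v)]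
  refine ⟨(v + w) / 2, show 0 < (v + w) / 2 by linarith, ?_⟩
  have : v + w ≠ 0 := by linarith
  field_simp
  linarith

theorem hasDerivAt_sub_const_div (c : ℝ) {u : ℝ} (hu : u ≠ 0) :
    HasDerivAt (fun u : ℝ => u - c / u) (1 + c / u ^ 2) u := by
  simpa using (hasDerivAt_id' u).fun_sub (hasDerivAt_const_div c hu)

theorem monotoneOn_sub_const_div {c : ℝ} (hc : 0 ≤ c) :
    MonotoneOn (fun u : ℝ => u - c / u) (Ioi 0) := fun _ ha _ _ hab =>
  sub_le_sub hab (div_le_div_of_nonneg_left hc ha hab)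

/-- The Cauchy–Schlömilch transformation. -/
theorem integral_Ioi_comp_sub_const_div {f : ℝ → E} (hf : Integrable f)
    (heven : ∀ v, f (-v) = f v) {c : ℝ} (hc : 0 < c) :
    ∫ u in Ioi 0, f (u - c / u) = (2 : ℝ)⁻¹ • ∫ v, f v := by
  have hderiv (u : ℝ) (hu : u ∈ Ioi 0) :
      HasDerivWithinAt (fun u : ℝ => u - c / u) (1 + c / u ^ 2) (Ioi 0) u :=
    (hasDerivAt_sub_const_div c (ne_of_gt hu)).hasDerivWithinAt
  have hmono := monotoneOn_sub_const_div hc.le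
  have hsubst : ∫ v, f v = ∫ u in Ioi 0, (1 + c / u ^ 2) • f (u - c / u) := by
    rw [← setIntegral_univ, ← image_sub_const_div_Ioi_zero hc,
      integral_image_eq_integral_deriv_smul_of_monotoneOn measurableSet_Ioi hderiv hmono]
  have hT : IntegrableOn (fun u => (1 + c / u ^ 2) • f (u - c / u)) (Ioi 0) :=
    (integrableOn_image_iff_integrableOn_deriv_smul_of_monotoneOn measurableSet_Ioi hderiv
      hmono f).1 (by rw [image_sub_const_div_Ioi_zero hc]; exact hf.integrableOn)
  have hA : IntegrableOn (fun u => f (u - c / u)) (Ioi 0) := by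
    have hbdd : ∀ᵐ u ∂volume.restrict (Ioi 0), ‖(1 + c / u ^ 2)⁻¹‖ ≤ 1 := by
      refine ae_restrict_of_forall_mem measurableSet_Ioi fun u _ => ?_
      rw [norm_inv, Real.norm_of_nonneg (by positivity)]
      exact inv_le_one_of_one_le₀ (le_add_of_nonneg_right (by positivity))
    refine IntegrableOn.congr_fun (hT.bdd_smul 1 (Measurable.aestronglyMeasurable (by fun_prop))
      hbdd) (fun u (hu : 0 < u) => ?_) measurableSet_Ioi
    simp only [Pi.smul_apply', smul_smul]
    rw [inv_mul_cancel₀ (by positivity), one_smul]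
  have hB : IntegrableOn (fun u => (c / u ^ 2) • f (u - c / u)) (Ioi 0) := by
    refine (hT.sub hA).congr_fun (fun u _ => ?_) measurableSet_Ioi
    simp only [Pi.sub_apply, add_smul, one_smul, add_sub_cancel_left]
  have hreflect :
      ∫ u in Ioi 0, (c / u ^ 2) • f (u - c / u) = ∫ u in Ioi 0, f (u - c / u) := by
    rw [← integral_Ioi_comp_const_div (fun u => f (u - c / u)) hc]
    refine setIntegral_congr_fun measurableSet_Ioi fun u (hu : 0 < u) => ?_
    rw [div_div_cancel₀ hc.ne', ← neg_sub, heven]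
  rw [hsubst]
  simp_rw [add_smul, one_smul]
  rw [integral_add hA hB, hreflect, smul_add, ← add_smul]
  norm_num

theorem image_one_div_four_mul_sq_Ioi_zero :
    (fun u : ℝ => 1 / (4 * u ^ 2)) '' Ioi 0 = Ioi 0 := by
  refine Subset.antisymm (image_subset_iff.2 fun u (hu : 0 < u) =>
    show 0 < 1 / (4 * u ^ 2) by positivity)
    fun x (hx : (0 : ℝ) < x) => ⟨1 / (2 * √x), mem_Ioi.2 (by positivity), ?_⟩
  have : √x ^ 2 = x := sq_sqrt hx.le
  field_simp
  linarith

theorem integral_Ioi_comp_one_div_four_mul_sq (f : ℝ → E) :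
    ∫ u in Ioi 0, (1 / (2 * u ^ 3)) • f (1 / (4 * u ^ 2)) = ∫ x in Ioi 0, f x := by
  have hanti : AntitoneOn (fun u : ℝ => 1 / (4 * u ^ 2)) (Ioi 0) := fun a ha _ _ hab => by
    have : 0 < a := ha
    exact one_div_le_one_div_of_le (by positivity) (by gcongr)
  have hderiv (u : ℝ) (hu : u ∈ Ioi 0) :
      HasDerivWithinAt (fun u : ℝ => 1 / (4 * u ^ 2)) (-(1 / (2 * u ^ 3))) (Ioi 0) u := by
    have hu : u ≠ 0 := ne_of_gt hu
    refine (((hasDerivAt_pow 2 u).const_mul 4).inv (by positivity)).hasDerivWithinAt.congr_deriv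
      ?_ |>.congr (fun _ _ => one_div _) (one_div _)
    field_simp
    ring
  conv_rhs => rw [← image_one_div_four_mul_sq_Ioi_zero]
  rw [integral_image_eq_integral_deriv_smul_of_antitoneOn measurableSet_Ioi hderiv hanti]
  simp_rw [neg_neg]

end Substitution

theorem integral_Ioi_exp_neg_sq_add_div_sq {c : ℝ} (hc : 0 < c) :
    ∫ u in Ioi 0, exp (-(u ^ 2 + (c / u) ^ 2)) = √π / 2 * exp (-(2 * c)) := by
  have hsq : ∀ u ∈ Ioi (0 : ℝ),
      exp (-(u ^ 2 + (c / u) ^ 2)) = exp (-(2 * c)) * exp (-(u - c / u) ^ 2) :=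
    fun u (hu : 0 < u) => by
      rw [← exp_add]
      congr 1
      field_simp
      ring
  have hint : Integrable fun v : ℝ => exp (-v ^ 2) := by
    simpa using integrable_exp_neg_mul_sq one_pos
  have hgauss : ∫ v, exp (-v ^ 2) = √π := by simpa using integral_gaussian 1
  rw [setIntegral_congr_fun measurableSet_Ioi hsq, integral_const_mul,
    integral_Ioi_comp_sub_const_div hint (fun v => by simp) hc, hgauss, smul_eq_mul]
  ring

theorem stableDensityHalf_one_div_four_mul_sq {u : ℝ} (hu : 0 < u) :
    stableDensityHalf (1 / (4 * u ^ 2)) = 4 * u ^ 3 / √π * exp (-u ^ 2) := by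
  have hsqrt : √(4 * π * (1 / (4 * u ^ 2)) ^ 3) = √π / (4 * u ^ 3) := by
    rw [show 4 * π * (1 / (4 * u ^ 2)) ^ 3 = π * (1 / (4 * u ^ 3)) ^ 2 by field_simp,
      sqrt_mul pi_pos.le, sqrt_sq (by positivity), mul_one_div]
  have hexp : -1 / (4 * (1 / (4 * u ^ 2))) = -u ^ 2 := by field_simp
  rw [stableDensityHalf, hsqrt, hexp, one_div_div]

theorem half_stable_density_laplace (s : ℝ) (hs : 0 < s) :
    ∫ x in Set.Ioi (0:ℝ), Real.exp (-(s * x)) * stableDensityHalf x =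
      Real.exp (-Real.sqrt s) := by
  have hpointwise : ∀ u ∈ Ioi (0 : ℝ),
      (1 / (2 * u ^ 3)) • (exp (-(s * (1 / (4 * u ^ 2)))) * stableDensityHalf (1 / (4 * u ^ 2))) =
        2 / √π * exp (-(u ^ 2 + (√s / 2 / u) ^ 2)) := fun u (hu : 0 < u) => by
    have hs' : (√s / 2 / u) ^ 2 = s * (1 / (4 * u ^ 2)) := by
      rw [div_pow, div_pow, sq_sqrt hs.le]
      ring
    rw [stableDensityHalf_one_div_four_mul_sq hu, hs', smul_eq_mul, neg_add, exp_add]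
    field_simp
    norm_num
  rw [← integral_Ioi_comp_one_div_four_mul_sq,
    setIntegral_congr_fun measurableSet_Ioi hpointwise, integral_const_mul,
    integral_Ioi_exp_neg_sq_add_div_sq (by positivity)]
  have : √π ≠ 0 := by positivity
  field_simp
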